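/- arXiv:2601.14668 — 3 statements merged into one kernel-verified Lean document; each statement's English description precedes it below -/
import Mathlib

section
/- Let $p$ be a prime and $M$ a finitely generated module over $\mathbb{Z}_p[G]$ for $G$ finite abelian. Then under the natural map, $\bigcap_{\mathbb{Z}_p[G]}^r M$ is identified with the set $\{x \in \bigwedge_{\mathbb{Q}_p[G]}^r (\mathbb{Q}_p \otimes_{\mathbb{Z}_p} M) \mid f(x) \in \mathbb{Z}_p[G] \text{ for all } f \in \bigwedge_{\mathbb{Z}_p[G]}^r \mathrm{Hom}_{\mathbb{Z}_p[G]}(M, \mathbb{Z}_p[G])\}$, where $\bigcap^r$ denotes the $r$-th exterior power bidual. In particular, the natural map $\mathbb{Q}_p \otimes_{\mathbb{Z}_p}\bigwedge_{\mathbb{Z}_p[G]}^r M \to \mathbb{Q}_p \otimes_{\mathbb{Z}_p}\bigcap_{\mathbb{Z}_p[G]}^r M$ is an isomorphism. -/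
open ExteriorAlgebra

namespace Stmt6Aux

variable {R : Type*} [CommRing R] {M : Type*} {N : Type*} {P : Type*}
  [AddCommGroup M] [Module R M] [AddCommGroup N] [Module R N]
  [AddCommGroup P] [Module R P] {r : ℕ}

/-- `ιMulti` as an alternating map into the `r`-th exterior power submodule. -/
noncomputable def wAlt (R : Type*) [CommRing R] (M : Type*) [AddCommGroup M] [Module R M]
    (r : ℕ) : M [⋀^Fin r]→ₗ[R] (⋀[R]^r M) :=
  (ιMulti R r).codRestrict (⋀[R]^r M)
    (fun v => ιMulti_range R r (Set.mem_range_self v))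

@[simp] lemma wAlt_coe (v : Fin r → M) :
    ((wAlt R M r v : ⋀[R]^r M) : ExteriorAlgebra R M) = ιMulti R r v := rfl

/-- Lifting an alternating map to a linear map on the exterior power, linearly. -/
noncomputable def altLiftL : (M [⋀^Fin r]→ₗ[R] P) →ₗ[R] ((⋀[R]^r M) →ₗ[R] P) :=
  (LinearMap.lcomp R P (Submodule.subtype _)) ∘ₗ
    (ExteriorAlgebra.liftAlternating (R := R) (M := M) (N := P)) ∘ₗ
      (LinearMap.single R (fun i => M [⋀^Fin i]→ₗ[R] P) r)

lemma altLiftL_apply (f : M [⋀^Fin r]→ₗ[R] P) (u : ⋀[R]^r M) (v : Fin r → M)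
    (hu : (u : ExteriorAlgebra R M) = ιMulti R r v) :
    altLiftL f u = f v := by
  simp only [altLiftL, LinearMap.comp_apply, LinearMap.lcomp_apply, Submodule.coe_subtype, hu]
  rw [ExteriorAlgebra.liftAlternating_apply_ιMulti]
  simp

lemma ext_wedge {f g : (⋀[R]^r M) →ₗ[R] P}
    (h : ∀ v : Fin r → M, f (wAlt R M r v) = g (wAlt R M r v)) : f = g := by
  have hle : ∀ x, x ∈ ⋀[R]^r M → x ∈ (LinearMap.ker (f - g)).map (Submodule.subtype _) := by
    intro x hx
    rw [← ιMulti_span_fixedDegree] at hx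
    refine Submodule.span_induction ?_ (Submodule.zero_mem _)
      (fun a b _ _ ha hb => Submodule.add_mem _ ha hb)
      (fun c a _ ha => Submodule.smul_mem _ c ha) hx
    rintro _ ⟨v, rfl⟩
    exact ⟨wAlt R M r v, by simp [LinearMap.sub_apply, h v], rfl⟩
  apply LinearMap.ext; intro w
  obtain ⟨w', hw', hww⟩ := hle w w.2
  have : w' = w := Subtype.ext hww
  subst this
  simpa [LinearMap.sub_apply, sub_eq_zero] using hw'

lemma mem_span_wedge {s : Set (⋀[R]^r M)}
    (h : ∀ v : Fin r → M, wAlt R M r v ∈ Submodule.span R s) (w : ⋀[R]^r M) :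
    w ∈ Submodule.span R s := by
  have hle : ∀ x, x ∈ ⋀[R]^r M → x ∈ (Submodule.span R s).map (Submodule.subtype _) := by
    intro x hx
    rw [← ιMulti_span_fixedDegree] at hx
    refine Submodule.span_induction ?_ (Submodule.zero_mem _)
      (fun a b _ _ ha hb => Submodule.add_mem _ ha hb)
      (fun c a _ ha => Submodule.smul_mem _ c ha) hx
    rintro _ ⟨v, rfl⟩
    exact ⟨wAlt R M r v, h v, rfl⟩
  obtain ⟨w', hw', hww⟩ := hle w w.2
  have : w' = w := Subtype.ext hww
  exact this ▸ hw'

/-- The value of the determinant pairing. -/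
noncomputable def dval (g : Fin r → Module.Dual R M) (v : Fin r → M) : R :=
  Matrix.det (Matrix.of fun i j => g i (v j))

/-- For fixed `g`, `dval g` as an alternating map in `v`. -/
noncomputable def dAltV (g : Fin r → Module.Dual R M) : M [⋀^Fin r]→ₗ[R] R :=
  (Matrix.detRowAlternating).compLinearMap (LinearMap.pi g)

/-- For fixed `v`, `dval · v` as an alternating map in `g`. -/
noncomputable def dAltG (v : Fin r → M) : (Module.Dual R M) [⋀^Fin r]→ₗ[R] R :=
  (Matrix.detRowAlternating).compLinearMap (LinearMap.pi (fun j => LinearMap.applyₗ (v j)))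

lemma dAltG_apply (v : Fin r → M) (g : Fin r → Module.Dual R M) :
    dAltG v g = dval g v := rfl

lemma dAltV_apply (g : Fin r → Module.Dual R M) (v : Fin r → M) :
    dAltV g v = dval g v := by
  show Matrix.det (Matrix.of fun i j => g j (v i)) = Matrix.det (Matrix.of fun i j => g i (v j))
  rw [← Matrix.det_transpose]; rfl

/-- The determinant pairing as an alternating map in `g` valued in alternating maps in `v`. -/
noncomputable def dPhi : (Module.Dual R M) [⋀^Fin r]→ₗ[R] (M [⋀^Fin r]→ₗ[R] R) where
  toFun := dAltV
  map_update_add' g i x y := by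
    ext v
    simp only [AlternatingMap.add_apply, dAltV_apply, ← dAltG_apply]
    exact (dAltG v).map_update_add g i x y
  map_update_smul' g i c x := by
    ext v
    simp only [AlternatingMap.smul_apply, dAltV_apply, ← dAltG_apply, smul_eq_mul]
    exact (dAltG v).map_update_smul g i c x
  map_eq_zero_of_eq' g i j hg hij := by
    ext v
    simp only [dAltV_apply, ← dAltG_apply, AlternatingMap.zero_apply]
    exact (dAltG v).map_eq_zero_of_eq g hg hij

lemma dPhi_apply (g : Fin r → Module.Dual R M) (v : Fin r → M) :
    dPhi g v = dval g v := dAltV_apply g v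

/-- The determinant pairing `⋀^r M* →ₗ Dual (⋀^r M)`. -/
noncomputable def myD (R : Type*) [CommRing R] (M : Type*) [AddCommGroup M] [Module R M]
    (r : ℕ) : (⋀[R]^r (Module.Dual R M)) →ₗ[R] Module.Dual R (⋀[R]^r M) :=
  altLiftL ((altLiftL (R := R) (M := M) (P := R)).compAlternatingMap dPhi)

lemma myD_apply (u : ⋀[R]^r (Module.Dual R M)) (g : Fin r → Module.Dual R M)
    (hu : (u : ExteriorAlgebra R (Module.Dual R M)) = ιMulti R r g)
    (w : ⋀[R]^r M) (v : Fin r → M)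
    (hw : (w : ExteriorAlgebra R M) = ιMulti R r v) :
    myD R M r u w = dval g v := by
  rw [myD, altLiftL_apply _ u g hu]
  simp only [LinearMap.compAlternatingMap_apply]
  rw [altLiftL_apply _ w v hw, dPhi_apply]

lemma myD_wAlt (g : Fin r → Module.Dual R M) (v : Fin r → M) :
    myD R M r (wAlt R (Module.Dual R M) r g) (wAlt R M r v) = dval g v :=
  myD_apply _ g rfl _ v rfl

/-- Functoriality of exterior powers. -/
noncomputable def wmap (f : M →ₗ[R] N) : (⋀[R]^r M) →ₗ[R] (⋀[R]^r N) :=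
  altLiftL ((wAlt R N r).compLinearMap f)

lemma wmap_apply (f : M →ₗ[R] N) (u : ⋀[R]^r M) (v : Fin r → M)
    (hu : (u : ExteriorAlgebra R M) = ιMulti R r v) :
    wmap f u = wAlt R N r (f ∘ v) := by
  rw [wmap, altLiftL_apply _ u v hu]; rfl

lemma wmap_wAlt (f : M →ₗ[R] N) (v : Fin r → M) :
    wmap f (wAlt R M r v) = wAlt R N r (f ∘ v) :=
  wmap_apply f _ v rfl

lemma wmap_comp_apply (f : M →ₗ[R] N) (g : N →ₗ[R] P) (u : ⋀[R]^r M) :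
    wmap g (wmap f u) = wmap (g ∘ₗ f) u := by
  have : (wmap (r := r) g) ∘ₗ (wmap f) = wmap (g ∘ₗ f) := by
    apply ext_wedge
    intro v
    simp [LinearMap.comp_apply, wmap_wAlt]
    rfl
  exact DFunLike.congr_fun this u

lemma wmap_smul_id (c : R) (f : M →ₗ[R] M) (hf : ∀ m, f m = c • m) (u : ⋀[R]^r M) :
    wmap f u = c ^ r • u := by
  have : (wmap (r := r) f) = c ^ r • LinearMap.id := by
    apply ext_wedge
    intro v
    rw [wmap_wAlt]
    have h1 : f ∘ v = fun i => c • v i := by ext i; simp [hf]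
    rw [h1]
    have := (wAlt R M r).toMultilinearMap.map_smul_univ (fun _ => c) v
    simp only [AlternatingMap.coe_multilinearMap] at this
    simp only [LinearMap.smul_apply, LinearMap.id_apply]
    simpa [Finset.prod_const] using this
  rw [this]; simp

/-- Naturality of the determinant pairing. -/
lemma myD_nat (f : M →ₗ[R] N) (F : ⋀[R]^r (Module.Dual R N)) (x : ⋀[R]^r M) :
    myD R N r F (wmap f x) = myD R M r (wmap (f.dualMap) F) x := by
  have : (LinearMap.lcomp R R (wmap (r := r) f)) ∘ₗ (myD R N r)
      = (LinearMap.lcomp R R (LinearMap.id)) ∘ₗ (myD R M r) ∘ₗ (wmap (f.dualMap)) := by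
    apply ext_wedge
    intro g
    apply ext_wedge
    intro v
    simp only [LinearMap.comp_apply, LinearMap.lcomp_apply, LinearMap.id_apply]
    rw [wmap_wAlt, wmap_wAlt, myD_wAlt, myD_wAlt]
    rfl
  have h2 := DFunLike.congr_fun (DFunLike.congr_fun this F) x
  simpa using h2

section sorted
variable {n : ℕ}

/-- the increasing enumeration of a finset of `Fin n` of cardinality `r` -/
noncomputable def sortFun (s : Finset (Fin n)) (hs : s.card = r) : Fin r → Fin n :=
  fun i => (s.orderIsoOfFin hs i : Fin n)

lemma sortFun_injective (s : Finset (Fin n)) (hs : s.card = r) :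
    Function.Injective (sortFun s hs) := fun _ _ hab =>
  (s.orderIsoOfFin hs).injective (Subtype.ext hab)

lemma sortFun_mem (s : Finset (Fin n)) (hs : s.card = r) (i : Fin r) :
    sortFun s hs i ∈ s := (s.orderIsoOfFin hs i).2

/-- sorted wedges of a family indexed by `Fin n` -/
noncomputable def sw (u : Fin n → M) (st : {s : Finset (Fin n) // s.card = r}) :
    ⋀[R]^r M := wAlt R M r (u ∘ sortFun st.1 st.2)

/-- If `u` spans `M`, the sorted wedges span `⋀^r M`. -/
lemma span_sw (u : Fin n → M) (hu : ∀ x : M, x ∈ Submodule.span R (Set.range u))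
    (w : ⋀[R]^r M) : w ∈ Submodule.span R (Set.range (sw u)) := by
  apply mem_span_wedge
  intro v
  have hc : ∀ j : Fin r, ∃ c : Fin n → R, ∑ i, c i • u i = v j := by
    intro j
    exact (Submodule.mem_span_range_iff_exists_fun R).mp (hu (v j))
  choose c hc using hc
  have hv : (wAlt R M r) v = ∑ φ : Fin r → Fin n,
      (∏ j, c j (φ j)) • (wAlt R M r) (fun j => u (φ j)) := by
    have h0 : (wAlt R M r) v = (wAlt R M r) (fun j => ∑ i, c j i • u i) := by
      congr 1; ext j; rw [hc]
    rw [h0]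
    rw [show ((wAlt R M r) fun j => ∑ i, c j i • u i)
        = (wAlt R M r).toMultilinearMap (fun j => ∑ i, c j i • u i) from rfl]
    rw [MultilinearMap.map_sum]
    refine Finset.sum_congr rfl (fun φ _ => ?_)
    have := (wAlt R M r).toMultilinearMap.map_smul_univ (fun j => c j (φ j))
      (fun j => u (φ j))
    simpa using this
  rw [hv]
  refine Submodule.sum_mem _ (fun φ _ => Submodule.smul_mem _ _ ?_)
  by_cases hφ : Function.Injective φ
  · set s : Finset (Fin n) := Finset.univ.image φ with hsdef
    have hs : s.card = r := by
      rw [hsdef, Finset.card_image_of_injective _ hφ, Finset.card_univ, Fintype.card_fin]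
    have hmem : ∀ j, φ j ∈ s := fun j => Finset.mem_image_of_mem φ (Finset.mem_univ j)
    set e : Fin r → Fin r := fun j => (s.orderIsoOfFin hs).symm ⟨φ j, hmem j⟩ with hedef
    have he : Function.Injective e := by
      intro a b hab
      have := (s.orderIsoOfFin hs).symm.injective hab
      exact hφ (congrArg Subtype.val this)
    have hbij : Function.Bijective e := (Finite.injective_iff_bijective).mp he
    set π : Equiv.Perm (Fin r) := Equiv.ofBijective e hbij with hπdef
    have hcomp : (u ∘ sortFun s hs) ∘ π = fun j => u (φ j) := by
      ext j
      simp only [Function.comp_apply, hπdef, Equiv.ofBijective_apply, hedef, sortFun]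
      rw [OrderIso.apply_symm_apply]
    have hperm := (wAlt R M r).map_perm (u ∘ sortFun s hs) π
    rw [← hcomp, hperm]
    rcases Int.units_eq_one_or (Equiv.Perm.sign π) with h1 | h1
    · rw [h1, one_smul]
      exact Submodule.subset_span ⟨⟨s, hs⟩, rfl⟩
    · rw [h1]
      simp only [Units.neg_smul, one_smul]
      exact Submodule.neg_mem _ (Submodule.subset_span ⟨⟨s, hs⟩, rfl⟩)
  · obtain ⟨a, b, hab, hne⟩ := Function.not_injective_iff.mp hφ
    have : (wAlt R M r) (fun j => u (φ j)) = 0 :=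
      (wAlt R M r).map_eq_zero_of_eq _ (by rw [hab]) hne
    rw [this]
    exact Submodule.zero_mem _
end sorted

section free
variable {n : ℕ}

/-- coordinate basis vectors of `Fin n → R` -/
def bvec (R : Type*) [CommRing R] (n : ℕ) : Fin n → (Fin n → R) := fun i => Pi.single i 1
/-- coordinate functionals -/
def bdual (R : Type*) [CommRing R] (n : ℕ) : Fin n → Module.Dual R (Fin n → R) :=
  fun i => LinearMap.proj i

lemma bvec_span (x : Fin n → R) : x ∈ Submodule.span R (Set.range (bvec R n)) := by
  have : x = ∑ i, x i • bvec R n i := by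
    ext j
    simp [bvec, Pi.single_apply]
  rw [this]
  exact Submodule.sum_mem _ fun i _ => Submodule.smul_mem _ _ (Submodule.subset_span ⟨i, rfl⟩)

lemma bdual_span (f : Module.Dual R (Fin n → R)) :
    f ∈ Submodule.span R (Set.range (bdual R n)) := by
  have : f = ∑ i, f (bvec R n i) • bdual R n i := by
    apply LinearMap.ext; intro x
    have hx : x = ∑ i, x i • bvec R n i := by
      ext j; simp [bvec, Pi.single_apply]
    conv_lhs => rw [hx]
    simp [bdual, map_sum, mul_comm]
  rw [this]
  exact Submodule.sum_mem _ fun i _ => Submodule.smul_mem _ _ (Submodule.subset_span ⟨i, rfl⟩)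

/-- The delta property of the determinant pairing on sorted basis wedges. -/
lemma myD_delta (S T : {s : Finset (Fin n) // s.card = r}) :
    myD R (Fin n → R) r (sw (bdual R n) S) (sw (bvec R n) T)
      = if S = T then (1 : R) else 0 := by
  rw [sw, sw, myD_wAlt]
  have hentry : ∀ i j, (bdual R n ∘ sortFun S.1 S.2) i ((bvec R n ∘ sortFun T.1 T.2) j)
      = if sortFun S.1 S.2 i = sortFun T.1 T.2 j then (1:R) else 0 := by
    intro i j
    simp [bdual, bvec, Pi.single_apply]
  by_cases hST : S = T
  · subst hST
    rw [if_pos rfl, dval]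
    have : (Matrix.of fun i j => (bdual R n ∘ sortFun S.1 S.2) i
        ((bvec R n ∘ sortFun S.1 S.2) j)) = (1 : Matrix (Fin r) (Fin r) R) := by
      ext i j
      rw [Matrix.of_apply, hentry i j, Matrix.one_apply]
      by_cases hij : i = j
      · subst hij; simp
      · rw [if_neg (fun h => hij (sortFun_injective S.1 S.2 h)), if_neg hij]
    rw [this, Matrix.det_one]
  · rw [if_neg hST, dval]
    have hsub : ¬ (S.1 ⊆ T.1) := by
      intro hsub
      exact hST (Subtype.ext (Finset.eq_of_subset_of_card_le hsub (by rw [S.2, T.2])))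
    obtain ⟨x, hxS, hxT⟩ := Finset.not_subset.mp hsub
    set i₀ : Fin r := (S.1.orderIsoOfFin S.2).symm ⟨x, hxS⟩ with hi₀
    have hx : sortFun S.1 S.2 i₀ = x := by
      rw [sortFun, hi₀, OrderIso.apply_symm_apply]
    apply Matrix.det_eq_zero_of_row_eq_zero i₀
    intro j
    rw [Matrix.of_apply, hentry i₀ j, hx, if_neg]
    intro h
    apply hxT
    rw [h]
    exact sortFun_mem T.1 T.2 j

lemma free_inj (x : ⋀[R]^r (Fin n → R))
    (hx : ∀ F : ⋀[R]^r (Module.Dual R (Fin n → R)), myD R (Fin n → R) r F x = 0) :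
    x = 0 := by
  obtain ⟨c, hc⟩ := (Submodule.mem_span_range_iff_exists_fun R).mp (span_sw (bvec R n) bvec_span x)
  have hcS : ∀ S, c S = 0 := by
    intro S
    have := hx (sw (bdual R n) S)
    rw [← hc] at this
    rw [map_sum] at this
    simp only [map_smul, smul_eq_mul] at this
    rw [Finset.sum_congr rfl (fun T _ => by rw [myD_delta S T])] at this
    simpa using this
  rw [← hc]
  simp [hcS]

lemma free_surj (z : Module.Dual R (⋀[R]^r (Module.Dual R (Fin n → R)))) :
    ∃ x : ⋀[R]^r (Fin n → R), (myD R (Fin n → R) r).flip x = z := by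
  refine ⟨∑ T, z (sw (bdual R n) T) • sw (bvec R n) T, ?_⟩
  have hspan : Submodule.span R (Set.range (sw (R := R) (bdual R n) (r := r))) = ⊤ :=
    eq_top_iff.mpr (fun F _ => span_sw (bdual R n) bdual_span F)
  apply LinearMap.ext_on hspan
  rintro _ ⟨S, rfl⟩
  rw [LinearMap.flip_apply, map_sum]
  simp only [map_smul, smul_eq_mul]
  rw [Finset.sum_congr rfl (fun T _ => by rw [myD_delta S T])]
  simp
end free

lemma torsion_exponent (p : ℕ) [Fact (Nat.Prime p)] {M : Type*} [AddCommGroup M]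
    [Module ℤ_[p] M] [IsNoetherian ℤ_[p] M] :
    ∃ c : ℕ, ∀ t ∈ Submodule.torsion ℤ_[p] M, ((p : ℤ_[p])) ^ c • t = 0 := by
  set T := Submodule.torsion ℤ_[p] M
  have hper : ∀ t ∈ T, ∃ c : ℕ, ((p : ℤ_[p])) ^ c • t = 0 := by
    intro t ht
    obtain ⟨a, ha⟩ := (Submodule.mem_torsion_iff t).mp ht
    have ha0 : (a : ℤ_[p]) ≠ 0 := nonZeroDivisors.coe_ne_zero a
    obtain ⟨m, w, hw⟩ := IsDiscreteValuationRing.associated_pow_irreducible ha0 PadicInt.irreducible_p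
    refine ⟨m, ?_⟩
    have ha' : (a : ℤ_[p]) • t = 0 := ha
    rw [← hw, mul_comm, mul_smul, ha', smul_zero]
  obtain ⟨ts, hts⟩ := (IsNoetherian.noetherian T)
  classical
  set f : M → ℕ := fun t => if h : t ∈ T then Classical.choose (hper t h) else 0 with hf
  set c := ts.sup f with hc
  refine ⟨c, ?_⟩
  have hsub : T ≤ LinearMap.ker (((p : ℤ_[p])) ^ c • (LinearMap.id : M →ₗ[ℤ_[p]] M)) := by
    rw [← hts, Submodule.span_le]
    intro t ht
    have htT : t ∈ T := by rw [← hts]; exact Submodule.subset_span ht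
    have hct : f t ≤ c := Finset.le_sup ht
    have hkill : ((p : ℤ_[p])) ^ (f t) • t = 0 := by
      rw [hf]; dsimp only; rw [dif_pos htT]
      exact Classical.choose_spec (hper t htT)
    simp only [SetLike.mem_coe, LinearMap.mem_ker, LinearMap.smul_apply, LinearMap.id_apply]
    calc ((p : ℤ_[p])) ^ c • t = ((p : ℤ_[p])) ^ (c - f t) • ((p : ℤ_[p])) ^ (f t) • t := by
          rw [smul_smul, ← pow_add, Nat.sub_add_cancel hct]
      _ = 0 := by rw [hkill, smul_zero]
  intro t ht
  simpa using hsub ht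

/-- Every finitely generated module over `ℤ_p[G]` admits a `p`-power quasi-splitting
into a finite free module. -/
lemma quasi_split (p : ℕ) [Fact (Nat.Prime p)] (G : Type*) [CommGroup G] [Fintype G]
    (M : Type*) [AddCommGroup M] [Module (MonoidAlgebra ℤ_[p] G) M]
    [Module.Finite (MonoidAlgebra ℤ_[p] G) M] :
    ∃ (n e : ℕ) (π : (Fin n → MonoidAlgebra ℤ_[p] G) →ₗ[MonoidAlgebra ℤ_[p] G] M)
      (σ : M →ₗ[MonoidAlgebra ℤ_[p] G] (Fin n → MonoidAlgebra ℤ_[p] G)),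
      ∀ m : M, π (σ m) = ((p : MonoidAlgebra ℤ_[p] G)) ^ e • m := by
  classical
  set k := ℤ_[p]
  set A := MonoidAlgebra k G with hA
  letI : Module k M := Module.compHom M (algebraMap k A)
  haveI : IsScalarTower k A M := IsScalarTower.of_compHom k A M
  obtain ⟨n, π, hπ⟩ := Module.Finite.exists_fin' A M
  haveI : Module.Finite k A :=
    Module.Finite.equiv ((Finsupp.linearEquivFunOnFinite k k G).symm.trans
      (MonoidAlgebra.coeffLinearEquiv k).symm)
  haveI : Module.Finite k M := Module.Finite.trans A M
  haveI : IsNoetherian k M := isNoetherian_of_isNoetherianRing_of_finite k M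
  set T := Submodule.torsion k M with hT
  haveI : Module.Finite k (M ⧸ T) := Module.Finite.of_surjective T.mkQ (Submodule.mkQ_surjective T)
  haveI : Module.Free k (M ⧸ T) := Module.free_of_finite_type_torsion_free'
  obtain ⟨s', hs'⟩ := Module.projective_lifting_property T.mkQ LinearMap.id
    (Submodule.mkQ_surjective T)
  have hπk : Function.Surjective (π.restrictScalars k) := hπ
  obtain ⟨u, hu⟩ := Module.projective_lifting_property (π.restrictScalars k) s' hπk
  obtain ⟨c, hc⟩ := torsion_exponent p (M := M)
  set τ : M →ₗ[k] (Fin n → A) := ((p : k)) ^ c • (u ∘ₗ T.mkQ) with hτ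
  have hτs : ∀ x : M, π (τ x) = ((p : k)) ^ c • x := by
    intro x
    have h1 : π (u (T.mkQ x)) = s' (T.mkQ x) := by
      have := DFunLike.congr_fun hu (T.mkQ x)
      simpa using this
    have h2 : s' (T.mkQ x) - x ∈ T := by
      have h0 : T.mkQ (s' (T.mkQ x) - x) = 0 := by
        rw [map_sub]
        have := DFunLike.congr_fun hs' (T.mkQ x)
        simp only [LinearMap.comp_apply, LinearMap.id_apply] at this
        rw [this, sub_self]
      have h0' : s' (T.mkQ x) - x ∈ LinearMap.ker T.mkQ := h0
      rwa [Submodule.ker_mkQ T] at h0'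
    have h3 : ((p : k)) ^ c • (s' (T.mkQ x) - x) = 0 := hc _ h2
    have h4 : π (τ x) = ((p : k)) ^ c • s' (T.mkQ x) := by
      rw [hτ]
      simp only [LinearMap.smul_apply, LinearMap.comp_apply]
      rw [LinearMap.map_smul_of_tower, h1]
    rw [h4, ← sub_eq_zero]
    rw [← smul_sub]
    exact h3
  -- averaging over the group
  set σ₀ : M →ₗ[k] (Fin n → A) :=
    ∑ g : G, (MonoidAlgebra.GroupSMul.linearMap k (Fin n → A) g⁻¹) ∘ₗ τ ∘ₗ
      (MonoidAlgebra.GroupSMul.linearMap k M g) with hσ₀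
  have hσ₀_apply : ∀ x : M, σ₀ x = ∑ g : G,
      (MonoidAlgebra.single g⁻¹ (1:k) : A) • τ ((MonoidAlgebra.single g (1:k) : A) • x) := by
    intro x
    rw [hσ₀, LinearMap.sum_apply]
    rfl
  have hcomm : ∀ (g : G) (v : M),
      σ₀ ((MonoidAlgebra.single g (1:k) : A) • v) = (MonoidAlgebra.single g (1:k) : A) • σ₀ v := by
    intro g v
    rw [hσ₀_apply, hσ₀_apply, Finset.smul_sum]
    refine Fintype.sum_bijective (· * g) (Group.mulRight_bijective g) _ _ fun i => ?_
    simp only [smul_smul, MonoidAlgebra.single_mul_single, one_mul, mul_one, mul_inv_rev,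
      mul_inv_cancel_left]
  set σ₁ : M →ₗ[A] (Fin n → A) := MonoidAlgebra.equivariantOfLinearOfComm σ₀ hcomm with hσ₁
  have hσ₁s : ∀ x : M, π (σ₁ x) = ((Fintype.card G : k) * ((p : k)) ^ c) • x := by
    intro x
    have h5 : σ₁ x = σ₀ x := rfl
    rw [h5, hσ₀_apply, map_sum]
    have h6 : ∀ g : G, π ((MonoidAlgebra.single g⁻¹ (1:k) : A)
        • τ ((MonoidAlgebra.single g (1:k) : A) • x)) = ((p : k)) ^ c • x := by
      intro g
      rw [π.map_smul, hτs, smul_comm, smul_smul, MonoidAlgebra.single_mul_single,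
        inv_mul_cancel, one_mul]
      have hone : (MonoidAlgebra.single (1 : G) (1:k) : A) • x = x := by
        rw [← MonoidAlgebra.one_def, one_smul]
      rw [hone]
    rw [Finset.sum_congr rfl (fun g _ => h6 g), Finset.sum_const, Finset.card_univ,
      ← Nat.cast_smul_eq_nsmul k, smul_smul]
  have hcard0 : ((Fintype.card G : k)) ≠ 0 := Nat.cast_ne_zero.mpr Fintype.card_ne_zero
  obtain ⟨a, w, hw⟩ := IsDiscreteValuationRing.associated_pow_irreducible hcard0
    PadicInt.irreducible_p
  refine ⟨n, a + c, π, (w : k) • σ₁, ?_⟩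
  intro m
  rw [LinearMap.smul_apply, LinearMap.map_smul_of_tower, hσ₁s, smul_smul, ← mul_assoc,
    mul_comm (w : k), hw]
  have : (((p:k)) ^ a * ((p:k)) ^ c) • m = (((p : k)) ^ (a + c)) • m := by rw [pow_add]
  rw [this, ← algebraMap_smul A (((p : k)) ^ (a + c)) m]
  congr 1
  rw [map_pow, map_natCast]

/-- `p`-power regularity in `ℤ_p[G]`. -/
lemma pow_p_regular (p : ℕ) [Fact (Nat.Prime p)] (G : Type*) [CommGroup G] [Fintype G]
    (c : ℕ) (x : MonoidAlgebra ℤ_[p] G)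
    (hx : ((p : MonoidAlgebra ℤ_[p] G)) ^ c * x = 0) : x = 0 := by
  have h1 : ((p : MonoidAlgebra ℤ_[p] G)) ^ c * x = ((p : ℤ_[p]) ^ c) • x := by
    rw [Algebra.smul_def, map_pow, map_natCast]
  rw [h1] at hx
  have hp : ((p : ℤ_[p])) ^ c ≠ 0 :=
    pow_ne_zero _ (Nat.cast_ne_zero.mpr (Fact.out (p := Nat.Prime p)).ne_zero)
  haveI : Module.IsTorsionFree ℤ_[p] (MonoidAlgebra ℤ_[p] G) := inferInstance
  exact (smul_eq_zero.mp hx).resolve_left hp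

end Stmt6Aux



set_option maxHeartbeats 2000000 in
set_option synthInstance.maxHeartbeats 1000000 in
/-- Lattice description of the exterior power bidual over `A = ℤ_p[G]` (`G` finite
abelian): let `M` be a finitely generated `A`-module, `r ≥ 1`, and let
`D : ⋀^r Hom_A(M,A) → Hom_A(⋀^r M, A)` be the determinant pairing
`(f₁∧⋯∧f_r)(x₁∧⋯∧x_r) = det(fᵢ(xⱼ))`, so that `D.flip : ⋀^r M → ⋂^r M` is the natural
map to the bidual `⋂^r M = Hom_A(⋀^r Hom_A(M,A), A)`.  Then: the kernel and cokernel of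
`D.flip` are killed by powers of `p` (so `ℚ_p ⊗ ⋀^r M → ℚ_p ⊗ ⋂^r M` is an isomorphism),
`⋂^r M` is `p`-torsion free, and any `x = y/p^k ∈ ℚ_p ⊗ ⋀^r M` with `F(x) ∈ A` for all
`F ∈ ⋀^r Hom_A(M,A)` comes from `⋂^r M`; this identifies `⋂^r M` with
`{x ∈ ⋀^r_{ℚ_p[G]}(ℚ_p ⊗ M) ∣ F(x) ∈ ℤ_p[G] for all F}`. -/
theorem stmt_6 (p : ℕ) [Fact (Nat.Prime p)]
    (G : Type*) [CommGroup G] [Fintype G] (r : ℕ) (hr : 1 ≤ r)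
    (M : Type*) [AddCommGroup M] [Module (MonoidAlgebra ℤ_[p] G) M]
    [Module.Finite (MonoidAlgebra ℤ_[p] G) M] :
    ∃ D : (⋀[MonoidAlgebra ℤ_[p] G]^r (Module.Dual (MonoidAlgebra ℤ_[p] G) M))
        →ₗ[MonoidAlgebra ℤ_[p] G]
        Module.Dual (MonoidAlgebra ℤ_[p] G) (⋀[MonoidAlgebra ℤ_[p] G]^r M),
      (∀ (g : Fin r → Module.Dual (MonoidAlgebra ℤ_[p] G) M)
          (u : ⋀[MonoidAlgebra ℤ_[p] G]^r (Module.Dual (MonoidAlgebra ℤ_[p] G) M)),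
        (u : ExteriorAlgebra (MonoidAlgebra ℤ_[p] G)
            (Module.Dual (MonoidAlgebra ℤ_[p] G) M))
          = ExteriorAlgebra.ιMulti (MonoidAlgebra ℤ_[p] G) r g →
        ∀ (v : Fin r → M) (w : ⋀[MonoidAlgebra ℤ_[p] G]^r M),
          (w : ExteriorAlgebra (MonoidAlgebra ℤ_[p] G) M)
            = ExteriorAlgebra.ιMulti (MonoidAlgebra ℤ_[p] G) r v →
          D u w = Matrix.det (Matrix.of fun i j => g i (v j))) ∧
      (∀ y : ⋀[MonoidAlgebra ℤ_[p] G]^r M,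
        D.flip y = 0 → ∃ k : ℕ, ((p : MonoidAlgebra ℤ_[p] G)) ^ k • y = 0) ∧
      (∀ z : Module.Dual (MonoidAlgebra ℤ_[p] G)
          (⋀[MonoidAlgebra ℤ_[p] G]^r (Module.Dual (MonoidAlgebra ℤ_[p] G) M)),
        ∃ (k : ℕ) (y : ⋀[MonoidAlgebra ℤ_[p] G]^r M),
          ((p : MonoidAlgebra ℤ_[p] G)) ^ k • z = D.flip y) ∧
      (∀ z : Module.Dual (MonoidAlgebra ℤ_[p] G)
          (⋀[MonoidAlgebra ℤ_[p] G]^r (Module.Dual (MonoidAlgebra ℤ_[p] G) M)),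
        (p : MonoidAlgebra ℤ_[p] G) • z = 0 → z = 0) ∧
      (∀ (y : ⋀[MonoidAlgebra ℤ_[p] G]^r M) (k : ℕ),
        (∀ F : ⋀[MonoidAlgebra ℤ_[p] G]^r (Module.Dual (MonoidAlgebra ℤ_[p] G) M),
          ∃ a : MonoidAlgebra ℤ_[p] G, D F y = ((p : MonoidAlgebra ℤ_[p] G)) ^ k * a) →
        ∃ z, ((p : MonoidAlgebra ℤ_[p] G)) ^ k • z = D.flip y) := by
  classical
  obtain ⟨n, e, π, σ, hπσ⟩ := Stmt6Aux.quasi_split p G M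
  refine ⟨Stmt6Aux.myD (MonoidAlgebra ℤ_[p] G) M r, ?_, ?_, ?_, ?_, ?_⟩
  · -- determinant formula
    intro g u hu v w hw
    exact Stmt6Aux.myD_apply u g hu w v hw
  · -- kernel is p-power torsion
    intro y hy
    have hDy : ∀ F, Stmt6Aux.myD (MonoidAlgebra ℤ_[p] G) M r F y = 0 := by
      intro F
      have := LinearMap.congr_fun hy F
      simpa using this
    have hx' : Stmt6Aux.wmap σ y = 0 := by
      apply Stmt6Aux.free_inj
      intro F
      rw [Stmt6Aux.myD_nat σ F y]
      exact hDy _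
    refine ⟨e * r, ?_⟩
    have h1 : Stmt6Aux.wmap π (Stmt6Aux.wmap σ y) = Stmt6Aux.wmap (π ∘ₗ σ) y :=
      Stmt6Aux.wmap_comp_apply σ π y
    have h2 : Stmt6Aux.wmap (π ∘ₗ σ) y = ((p : MonoidAlgebra ℤ_[p] G) ^ e) ^ r • y :=
      Stmt6Aux.wmap_smul_id ((p : MonoidAlgebra ℤ_[p] G) ^ e) (π ∘ₗ σ) (fun m => hπσ m) y
    rw [hx', map_zero] at h1
    rw [pow_mul]
    rw [← h2, ← h1]
  · -- cokernel is p-power torsion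
    intro z
    obtain ⟨x', hx'⟩ := Stmt6Aux.free_surj (z ∘ₗ (Stmt6Aux.wmap (σ.dualMap)))
    refine ⟨e * r, Stmt6Aux.wmap π x', ?_⟩
    apply LinearMap.ext
    intro F
    have h1 : (Stmt6Aux.myD (MonoidAlgebra ℤ_[p] G) M r).flip (Stmt6Aux.wmap π x') F
        = Stmt6Aux.myD (MonoidAlgebra ℤ_[p] G) M r F (Stmt6Aux.wmap π x') := rfl
    rw [h1, Stmt6Aux.myD_nat π F x']
    have h2 : Stmt6Aux.myD (MonoidAlgebra ℤ_[p] G) (Fin n → MonoidAlgebra ℤ_[p] G) r (Stmt6Aux.wmap π.dualMap F) x'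
        = (z ∘ₗ (Stmt6Aux.wmap (σ.dualMap))) (Stmt6Aux.wmap π.dualMap F) := by
      rw [← hx']; rfl
    rw [h2]
    simp only [LinearMap.comp_apply]
    have h3 : Stmt6Aux.wmap σ.dualMap (Stmt6Aux.wmap π.dualMap F)
        = Stmt6Aux.wmap (σ.dualMap ∘ₗ π.dualMap) F :=
      Stmt6Aux.wmap_comp_apply π.dualMap σ.dualMap F
    have h4 : ∀ φ : Module.Dual (MonoidAlgebra ℤ_[p] G) M, (σ.dualMap ∘ₗ π.dualMap) φ = ((p : MonoidAlgebra ℤ_[p] G) ^ e) • φ := by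
      intro φ
      apply LinearMap.ext
      intro m
      simp only [LinearMap.comp_apply, LinearMap.dualMap_apply, LinearMap.smul_apply]
      rw [hπσ m, map_smul]
    have h5 : Stmt6Aux.wmap (σ.dualMap ∘ₗ π.dualMap) F = ((p : MonoidAlgebra ℤ_[p] G) ^ e) ^ r • F :=
      Stmt6Aux.wmap_smul_id ((p : MonoidAlgebra ℤ_[p] G) ^ e) _ h4 F
    rw [h3, h5, map_smul]
    simp only [LinearMap.smul_apply, smul_eq_mul]
    rw [pow_mul]
  · -- bidual is p-torsion free
    intro z hz
    apply LinearMap.ext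
    intro F
    have := LinearMap.congr_fun hz F
    simp only [LinearMap.smul_apply, smul_eq_mul, LinearMap.zero_apply] at this
    have h0 : ((p : MonoidAlgebra ℤ_[p] G)) ^ 1 * z F = 0 := by rw [pow_one]; exact this
    simpa using Stmt6Aux.pow_p_regular p G 1 (z F) h0
  · -- divisibility descends to the bidual
    intro y k hk
    have hcancel : ∀ a b : MonoidAlgebra ℤ_[p] G, ((p : MonoidAlgebra ℤ_[p] G)) ^ k * a = ((p : MonoidAlgebra ℤ_[p] G)) ^ k * b → a = b := by
      intro a b hab
      have : ((p : MonoidAlgebra ℤ_[p] G)) ^ k * (a - b) = 0 := by rw [mul_sub, hab, sub_self]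
      have := Stmt6Aux.pow_p_regular p G k _ this
      exact sub_eq_zero.mp this
    choose q hq using hk
    refine ⟨{ toFun := q
              map_add' := ?_
              map_smul' := ?_ }, ?_⟩
    · intro F F'
      apply hcancel
      rw [mul_add, ← hq, ← hq, ← hq, map_add, LinearMap.add_apply]
    · intro a F
      apply hcancel
      simp only [RingHom.id_apply, smul_eq_mul]
      rw [← mul_assoc, mul_comm (((p : MonoidAlgebra ℤ_[p] G)) ^ k) a, mul_assoc, ← hq, ← hq,
        map_smul, LinearMap.smul_apply, smul_eq_mul]
    · apply LinearMap.ext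
      intro F
      simp only [LinearMap.smul_apply, LinearMap.coe_mk, AddHom.coe_mk, smul_eq_mul]
      rw [← hq]
      rfl
end

section
/- Let $G$ be a finite abelian group and $v$ data consisting of subgroups $I_v \subseteq D_v \subseteq G$ and an element $\sigma_v \in D_v/I_v$. Fix a lift $\tilde\sigma_v \in D_v$ of $\sigma_v$. Define $\delta_v := 1 - \tilde\sigma_v \sum_{\tau \in I_v} \tau + \frac{1}{\#(D_v/I_v)}\sum_{\tau \in D_v} \tau \in \mathbb{Q}[G]$. Then $\delta_v$ is a unit in $\mathbb{Q}[G]$: for every character $\chi : G \to \mathbb{C}^\times$, $\chi(\delta_v) \neq 0$; explicitly $\chi(\delta_v) = 1 - \chi(\tilde\sigma_v)\#I_v$ if $\chi|_{I_v} = 1$ and $\chi|_{D_v} \neq 1$, $\chi(\delta_v) = 1 - \#I_v + \#I_v/\#(D_v/I_v) \cdot \#(D_v/I_v)$-adjusted value $= 1$ if $\chi|_{D_v} = 1$... more simply: $\chi(\delta_v) = 1$ if $\chi|_{I_v} \neq 1$; $\chi(\delta_v) = 1 - \chi(\tilde\sigma_v)\cdot \#I_v$ if $\chi|_{I_v}=1,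 \chi|_{D_v}\neq 1$; and $\chi(\delta_v) = 1 - \#I_v + \#I_v = 1$ if $\chi|_{D_v}=1$. Hence $\chi(\delta_v) \neq 0$ for all $\chi$ provided $\chi(\tilde\sigma_v)\#I_v \neq 1$ whenever $\chi|_{I_v}=1$ and $\chi|_{D_v}\neq 1$; in particular when $\#I_v = 1$ and $\sigma_v$ generates $D_v$ nontrivially on such $\chi$, i.e. $\chi(\sigma_v) \neq 1$, one gets $\chi(\delta_v) = 1 - \chi(\sigma_v) \neq 0$. Conclude: if $\#I_v \geq 2$, or if $I_v$ trivial, then $\delta_v \in \mathbb{Q}[G]^\times$. -/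
/-!
For a finite subgroup `H` let `e_H = (#H)⁻¹ ∑_{h ∈ H} h`, an idempotent of `ℚ[G]`. Since
`e_I e_D = e_D` and `σ e_D = e_D`, one has `δ = (1 - #I σ e_I)(1 - e_D) + e_D`, so `δ` is a unit
as soon as `1 - #I σ e_I` is invertible on the corner `(1 - e_D) ℚ[G]`.

If `#I ≠ 1`, then `1 - #I σ` is already a unit: with `m` the order of `σ`, it divides
`1 - (#I σ)^m = 1 - #I^m`, a nonzero rational. If `I` is trivial, `D` is generated by `σ`, say of
order `n`, and `(1 - σ) ∑_{j<n} j σ^j = ∑_{j<n} σ^j - n = n (e_D - 1)`, so `1 - σ` is invertible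
on the corner.
-/

open MonoidAlgebra Finset Subgroup

section RingLemmas

variable {R : Type*} [CommRing R]

theorem IsIdempotentElem.isUnit_mul_one_sub_add {e a : R} (he : IsIdempotentElem e)
    (h : ∃ u, a * u * (1 - e) = 1 - e) : IsUnit (a * (1 - e) + e) := by
  obtain ⟨u, h⟩ := h
  refine IsUnit.of_mul_eq_one (u * (1 - e) + e) ?_
  have he' : e * e = e := he
  linear_combination (1 - e) * h + (2 - a - u) * he'

theorem isUnit_one_sub_of_isUnit_one_sub_pow {x : R} {m : ℕ} (h : IsUnit (1 - x ^ m)) :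
    IsUnit (1 - x) := by
  rw [← mul_neg_geom_sum] at h
  exact isUnit_of_mul_isUnit_left h

theorem one_sub_mul_sum_range_natCast_mul_pow (x : R) (n : ℕ) :
    (1 - x) * ∑ j ∈ range n, (j : R) * x ^ j =
      ∑ j ∈ range n, x ^ j - 1 - ((n : R) - 1) * x ^ n := by
  induction n with
  | zero => simp
  | succ n ih =>
    rw [sum_range_succ, sum_range_succ]
    push_cast
    linear_combination ih

end RingLemmas

section SubgroupAverage

variable (k : Type*) {G : Type*} [Group G]

noncomputable def subgroupAverage [Field k] (H : Subgroup G) [Fintype H] : MonoidAlgebra k G :=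
  (Nat.card H : k)⁻¹ • ∑ h : H, single (h : G) 1

variable {k}

theorem single_mul_sum_subgroup [Semiring k] {H : Subgroup G} [Fintype H] {g : G} (hg : g ∈ H) :
    single g (1 : k) * ∑ h : H, single (h : G) 1 = ∑ h : H, single (h : G) 1 := by
  rw [mul_sum]
  simp only [single_mul_single, one_mul]
  exact Fintype.sum_equiv (Equiv.mulLeft ⟨g, hg⟩) _ _ fun _ ↦ rfl

theorem sum_subgroup_mul_sum_subgroup [Semiring k] {H K : Subgroup G} [Fintype H] [Fintype K]
    (hHK : H ≤ K) :
    (∑ h : H, single (h : G) (1 : k)) * ∑ h : K, single (h : G) 1 =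
      Nat.card H • ∑ h : K, single (h : G) 1 := by
  simp only [sum_mul, single_mul_sum_subgroup (hHK (SetLike.coe_mem _)), sum_const, card_univ,
    Nat.card_eq_fintype_card]

theorem single_mul_subgroupAverage [Field k] {H : Subgroup G} [Fintype H] {g : G} (hg : g ∈ H) :
    single g (1 : k) * subgroupAverage k H = subgroupAverage k H := by
  rw [subgroupAverage, mul_smul_comm, single_mul_sum_subgroup hg]

theorem subgroupAverage_bot [Field k] [Fintype (⊥ : Subgroup G)] :
    subgroupAverage k (⊥ : Subgroup G) = 1 := by
  rw [subgroupAverage, Fintype.sum_unique, Subgroup.mem_bot.mp (default : (⊥ : Subgroup G)).2]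
  simp [one_def]

variable [Field k] [CharZero k]

theorem subgroupAverage_mul_of_le {H K : Subgroup G} [Fintype H] [Fintype K] (hHK : H ≤ K) :
    subgroupAverage k H * subgroupAverage k K = subgroupAverage k K := by
  rw [subgroupAverage, subgroupAverage, smul_mul_smul_comm, sum_subgroup_mul_sum_subgroup hHK,
    ← Nat.cast_smul_eq_nsmul k, smul_smul]
  congr 1
  field_simp

theorem isIdempotentElem_subgroupAverage (H : Subgroup G) [Fintype H] :
    IsIdempotentElem (subgroupAverage k H) :=
  subgroupAverage_mul_of_le le_rfl

theorem sum_subgroup_eq_natCast_mul_subgroupAverage (H : Subgroup G) [Fintype H] :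
    ∑ h : H, single (h : G) (1 : k) = (Nat.card H : MonoidAlgebra k G) * subgroupAverage k H := by
  rw [subgroupAverage, ← nsmul_eq_mul, ← Nat.cast_smul_eq_nsmul k, smul_smul,
    mul_inv_cancel₀ (by simp), one_smul]

end SubgroupAverage

section Cyclic

variable {k : Type*} [Field k] [CharZero k] {G : Type*} [CommGroup G]

theorem isUnit_one_sub_natCast_mul_single {g : G} (hg : IsOfFinOrder g) {n : ℕ} (hn : n ≠ 1) :
    IsUnit (1 - (n : MonoidAlgebra k G) * single g 1) := by
  apply isUnit_one_sub_of_isUnit_one_sub_pow (m := orderOf g)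
  have hpow : ((n : MonoidAlgebra k G) * single g 1) ^ orderOf g =
      algebraMap k _ ((n : k) ^ orderOf g) := by
    rw [mul_pow, single_pow, pow_orderOf_eq_one, one_pow, ← one_def, mul_one, map_pow, map_natCast]
  rw [hpow, ← map_one (algebraMap k _), ← map_sub]
  refine (IsUnit.mk0 _ ?_).map _
  rw [sub_ne_zero, ne_comm]
  exact_mod_cast (pow_eq_one_iff.not.mpr (by simp [hn, hg.orderOf_pos.ne']) : n ^ orderOf g ≠ 1)

theorem exists_one_sub_single_mul_eq_one_sub_subgroupAverage_zpowers (g : G)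
    [Fintype (zpowers g)] :
    ∃ u : MonoidAlgebra k G, (1 - single g 1) * u = 1 - subgroupAverage k (zpowers g) := by
  set n := orderOf g
  set C := algebraMap k (MonoidAlgebra k G)
  have hg : IsOfFinOrder g := finite_zpowers.1 (Set.toFinite _)
  have hsum : ∑ h : zpowers g, single (h : G) (1 : k) = ∑ j ∈ range n, single g 1 ^ j := by
    rw [← Fin.sum_univ_eq_sum_range]
    exact (Fintype.sum_equiv (finEquivZPowers hg) _ _ fun j ↦ by simp [finEquivZPowers_apply]).symm
  have hpow : single g (1 : k) ^ n = 1 := by rw [single_pow, pow_orderOf_eq_one, one_pow, one_def]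
  have hn : C (n : k)⁻¹ * (n : MonoidAlgebra k G) = 1 := by
    rw [← map_natCast C, ← map_mul, inv_mul_cancel₀ (by simpa [n] using hg.orderOf_pos.ne'),
      map_one]
  refine ⟨-C (n : k)⁻¹ * ∑ j ∈ range n, (j : MonoidAlgebra k G) * single g 1 ^ j, ?_⟩
  rw [subgroupAverage, Nat.card_zpowers, hsum, Algebra.smul_def]
  linear_combination -C (n : k)⁻¹ * one_sub_mul_sum_range_natCast_mul_pow (single g (1 : k)) n
    + (C (n : k)⁻¹ * (n - 1)) * hpow + hn

theorem isUnit_one_sub_natCast_mul_single_mul {g : G} (hg : IsOfFinOrder g) {n : ℕ} (hn : n ≠ 1)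
    {e : MonoidAlgebra k G} (he : IsIdempotentElem e) :
    IsUnit (1 - (n : MonoidAlgebra k G) * single g 1 * e) := by
  have hunit := isUnit_one_sub_natCast_mul_single (k := k) hg hn
  have h := he.one_sub.isUnit_mul_one_sub_add
    ⟨↑hunit.unit⁻¹, by rw [hunit.mul_val_inv, one_mul]⟩
  convert h using 1
  ring

end Cyclic

theorem stmt_9_general (G : Type*) [CommGroup G]
    (I D : Subgroup G) [Fintype I] [Fintype D] (hID : I ≤ D)
    (σ : G) (hσD : σ ∈ D)
    (hgen : ∀ d ∈ D, ∃ (m : ℤ) (τ : G), τ ∈ I ∧ d = σ ^ m * τ) :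
    IsUnit ((1 : MonoidAlgebra ℚ G)
      - MonoidAlgebra.single σ (1 : ℚ) * ∑ τ : I, MonoidAlgebra.single (τ : G) (1 : ℚ)
      + ((Nat.card I : ℚ) / (Nat.card D : ℚ)) •
          ∑ τ : D, MonoidAlgebra.single (τ : G) (1 : ℚ)) := by
  set p := Nat.card I
  set s : MonoidAlgebra ℚ G := single σ 1
  have hδ : 1 - s * ∑ τ : I, single (τ : G) (1 : ℚ) + ((p : ℚ) / (Nat.card D : ℚ)) •
      ∑ τ : D, single (τ : G) (1 : ℚ) =
      (1 - p * s * subgroupAverage ℚ I) * (1 - subgroupAverage ℚ D) + subgroupAverage ℚ D := by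
    rw [sum_subgroup_eq_natCast_mul_subgroupAverage (k := ℚ) I, div_eq_mul_inv, mul_smul,
      ← subgroupAverage, Nat.cast_smul_eq_nsmul ℚ, nsmul_eq_mul]
    linear_combination -(p * s : MonoidAlgebra ℚ G) * subgroupAverage_mul_of_le (k := ℚ) hID
      - (p : MonoidAlgebra ℚ G) * single_mul_subgroupAverage (k := ℚ) hσD
  rw [hδ]
  apply (isIdempotentElem_subgroupAverage D).isUnit_mul_one_sub_add
  rcases eq_or_ne p 1 with hp | hp
  · obtain rfl : I = ⊥ := Subgroup.card_eq_one.mp hp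
    obtain rfl : D = zpowers σ := by
      refine le_antisymm (fun d hd ↦ ?_) (zpowers_le.mpr hσD)
      obtain ⟨m, τ, hτ, rfl⟩ := hgen d hd
      rw [Subgroup.mem_bot.mp hτ, mul_one]
      exact zpow_mem_zpowers σ m
    obtain ⟨u, hu⟩ := exists_one_sub_single_mul_eq_one_sub_subgroupAverage_zpowers (k := ℚ) σ
    refine ⟨u, ?_⟩
    rw [hp, subgroupAverage_bot, Nat.cast_one, one_mul, mul_one, hu]
    exact (isIdempotentElem_subgroupAverage _).one_sub
  · have hσ : IsOfFinOrder σ :=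
      Submonoid.isOfFinOrder_coe.mpr (isOfFinOrder_of_finite (⟨σ, hσD⟩ : D))
    have hunit := isUnit_one_sub_natCast_mul_single_mul (k := ℚ) hσ hp
      (isIdempotentElem_subgroupAverage I)
    exact ⟨↑hunit.unit⁻¹, by rw [hunit.mul_val_inv, one_mul]⟩

/-- Let `G` be a finite abelian group, `I ≤ D ≤ G` subgroups (inertia and decomposition
groups), and `σ ∈ D` an element whose class generates `D/I` (a Frobenius lift).  Then
`δ = 1 - σ·(∑_{τ∈I} τ) + (1/#(D/I))·(∑_{τ∈D} τ) ∈ ℚ[G]` (here `1/#(D/I) = #I/#D`)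
is a unit of `ℚ[G]`. -/
theorem stmt_9 (G : Type*) [CommGroup G] [Fintype G] [DecidableEq G]
    (I D : Subgroup G) [Fintype I] [Fintype D] (hID : I ≤ D)
    (σ : G) (hσD : σ ∈ D)
    (hgen : ∀ d ∈ D, ∃ (m : ℤ) (τ : G), τ ∈ I ∧ d = σ ^ m * τ) :
    IsUnit ((1 : MonoidAlgebra ℚ G)
      - MonoidAlgebra.single σ (1 : ℚ) * ∑ τ : I, MonoidAlgebra.single (τ : G) (1 : ℚ)
      + ((Nat.card I : ℚ) / (Nat.card D : ℚ)) •
          ∑ τ : D, MonoidAlgebra.single (τ : G) (1 : ℚ)) :=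
  stmt_9_general G I D hID σ hσD hgen
end

section
/- Let $R$ be a commutative ring with an exact sequence of finite free $R$-modules $0 \to P_1 \xrightarrow{f} P_2 \xrightarrow{g} P_3 \to 0$ where $P_i$ has rank $r_i$ (so $r_2 = r_1 + r_3$). Then the map $\bigwedge^{r_1} P_1 \otimes_R \bigwedge^{r_3} P_3 \to \bigwedge^{r_2} P_2$ given by $(x_1 \wedge \cdots \wedge x_{r_1}) \otimes (y_1 \wedge \cdots \wedge y_{r_3}) \mapsto f(x_1) \wedge \cdots \wedge f(x_{r_1}) \wedge \tilde{y}_1 \wedge \cdots \wedge \tilde{y}_{r_3}$, where $\tilde{y}_i$ is any lift of $y_i$ along $g$, is a well-defined isomorphism independent of the choice of lifts. -/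
/-!
A section of `g` splits `P₂ ≅ P₁ × P₃`, so bases `b₁`, `b₃` of `P₁`, `P₃` give a basis `b₂` of `P₂`
in which the family `(f ∘ x, z)` has a block upper-triangular coordinate matrix. Hence
`det_{b₂} (f ∘ x, z) = det_{b₁} x * det_{b₃} (g ∘ z)`, which depends on `z` only through `g ∘ z`.
A basis `b` of a free module of rank `n` identifies `⋀ⁿ` with `R` through `ιMulti v ↦ det_b v`,
and `Φ` is the composite `⋀^{r₁} P₁ ⊗ ⋀^{r₃} P₃ ≅ R ⊗ R ≅ R ≅ ⋀^{r₁+r₃} P₂`.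
-/

open TensorProduct

namespace Module.Basis

variable {R M M' N : Type*} [CommRing R] [AddCommGroup M] [Module R M]
  [AddCommGroup M'] [Module R M'] [AddCommGroup N] [Module R N]

theorem alternatingMap_apply_eq_det_smul {ι : Type*} [Fintype ι] [DecidableEq ι]
    (b : Basis ι R M) (F : M [⋀^ι]→ₗ[R] N) (v : ι → M) : F v = b.det v • F b := by
  suffices F = b.det.smulRight (F b) from congr($this v)
  refine b.ext_alternating fun i hi => ?_
  let σ : Equiv.Perm ι := Equiv.ofBijective i (Finite.injective_iff_bijective.1 hi)
  change F (b ∘ σ) = b.det.smulRight (F b) (b ∘ σ)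
  simp [AlternatingMap.map_perm, det_self, Units.smul_def]

theorem det_prod_sumElim_inl {ι ι' : Type*} [Fintype ι] [DecidableEq ι] [Fintype ι']
    [DecidableEq ι'] (b : Basis ι R M) (b' : Basis ι' R M') (x : ι → M) (z : ι' → M × M') :
    (b.prod b').det (Sum.elim (LinearMap.inl R M M' ∘ x) z)
      = b.det x * b'.det (Prod.snd ∘ z) := by
  have : (b.prod b').toMatrix (Sum.elim (LinearMap.inl R M M' ∘ x) z) =
      Matrix.fromBlocks (b.toMatrix x) (Matrix.of fun i j => b.repr (z j).1 i) 0
        (b'.toMatrix (Prod.snd ∘ z)) := by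
    ext (i | i) (j | j) <;> simp [toMatrix_apply, prod_repr_inl, prod_repr_inr]
  rw [det_apply, this, Matrix.det_fromBlocks_zero₂₁, det_apply, det_apply]

variable {n : ℕ}

noncomputable def topExteriorPowerEquiv (b : Basis (Fin n) R M) : ⋀[R]^n M ≃ₗ[R] R :=
  LinearEquiv.ofLinearMap (exteriorPower.alternatingMapLinearEquiv b.det)
    (LinearMap.toSpanSingleton R _ (exteriorPower.ιMulti R n b))
    (LinearMap.ext_ring (by simp [det_self]))
    (exteriorPower.linearMap_ext <| AlternatingMap.ext fun v => by
      simp [← b.alternatingMap_apply_eq_det_smul])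

@[simp]
theorem topExteriorPowerEquiv_ιMulti (b : Basis (Fin n) R M) (v : Fin n → M) :
    b.topExteriorPowerEquiv (exteriorPower.ιMulti R n v) = b.det v := by
  simp [topExteriorPowerEquiv]

end Module.Basis

theorem Function.Exact.exists_basis_det_append {R P₁ P₂ P₃ : Type*} [CommRing R]
    [AddCommGroup P₁] [Module R P₁] [AddCommGroup P₂] [Module R P₂] [AddCommGroup P₃] [Module R P₃]
    {f : P₁ →ₗ[R] P₂} {g : P₂ →ₗ[R] P₃} (hfg : Function.Exact f g)
    (hf : Function.Injective f) (hg : Function.Surjective g) {p q : ℕ}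
    (b₁ : Module.Basis (Fin p) R P₁) (b₃ : Module.Basis (Fin q) R P₃) :
    ∃ b₂ : Module.Basis (Fin (p + q)) R P₂, ∀ (x : Fin p → P₁) (z : Fin q → P₂),
      b₂.det (Fin.append (f ∘ x) z) = b₁.det x * b₃.det (g ∘ z) := by
  have := Module.Projective.of_basis b₃
  obtain ⟨l, hl⟩ := Module.projective_lifting_property g LinearMap.id hg
  obtain ⟨e, hfe, hge⟩ := hfg.splitSurjectiveEquiv hf ⟨l, hl⟩
  refine ⟨((b₁.prod b₃).map e.symm).reindex finSumFinEquiv, fun x z => ?_⟩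
  have hsplit : e ∘ Fin.append (f ∘ x) z ∘ finSumFinEquiv
      = Sum.elim (LinearMap.inl R P₁ P₃ ∘ x) (e ∘ z) := by
    ext (i | j) <;> simp [hfe]
  simp only [Module.Basis.det_reindex, Module.Basis.det_map, LinearEquiv.symm_symm, hsplit,
    Module.Basis.det_prod_sumElim_inl, hge, LinearMap.coe_comp, LinearMap.coe_snd,
    LinearEquiv.coe_coe, Function.comp_assoc]

theorem stmt_11_general (R : Type*) [CommRing R]
    (P₁ P₂ P₃ : Type*) [AddCommGroup P₁] [Module R P₁] [AddCommGroup P₂] [Module R P₂]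
    [AddCommGroup P₃] [Module R P₃]
    [Module.Free R P₁] [Module.Finite R P₁]
    [Module.Free R P₃] [Module.Finite R P₃] (r₁ r₃ : ℕ)
    (h₁ : Module.finrank R P₁ = r₁) (h₃ : Module.finrank R P₃ = r₃)
    (f : P₁ →ₗ[R] P₂) (g : P₂ →ₗ[R] P₃)
    (hf : Function.Injective f) (hg : Function.Surjective g)
    (hfg : LinearMap.range f = LinearMap.ker g) :
    ∃ Φ : ((⋀[R]^r₁ P₁) ⊗[R] (⋀[R]^r₃ P₃)) ≃ₗ[R] ⋀[R]^(r₁ + r₃) P₂,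
      ∀ (x : Fin r₁ → P₁) (y : Fin r₃ → P₃) (ylift : Fin r₃ → P₂),
        (∀ i, g (ylift i) = y i) →
        ∀ (u : ⋀[R]^r₁ P₁) (v : ⋀[R]^r₃ P₃) (w : ⋀[R]^(r₁ + r₃) P₂),
          (u : ExteriorAlgebra R P₁) = ExteriorAlgebra.ιMulti R r₁ x →
          (v : ExteriorAlgebra R P₃) = ExteriorAlgebra.ιMulti R r₃ y →
          (w : ExteriorAlgebra R P₂)
            = ExteriorAlgebra.ιMulti R (r₁ + r₃) (Fin.append (f ∘ x) ylift) →
          Φ (u ⊗ₜ[R] v) = w := by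
  -- `Module.finBasis` needs a nontrivial ring; over the zero ring both sides vanish.
  rcases subsingleton_or_nontrivial R with _ | _
  · have := Module.subsingleton R ((⋀[R]^r₁ P₁) ⊗[R] (⋀[R]^r₃ P₃))
    have := Module.subsingleton R (⋀[R]^(r₁ + r₃) P₂)
    exact ⟨.ofSubsingleton _ _, by intros; exact Subsingleton.elim _ _⟩
  let b₁ := (Module.finBasis R P₁).reindex (finCongr h₁)
  let b₃ := (Module.finBasis R P₃).reindex (finCongr h₃)
  obtain ⟨b₂, hb₂⟩ := (LinearMap.exact_iff.2 hfg.symm).exists_basis_det_append hf hg b₁ b₃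
  refine ⟨TensorProduct.congr b₁.topExteriorPowerEquiv b₃.topExteriorPowerEquiv ≪≫ₗ
    TensorProduct.lid R R ≪≫ₗ b₂.topExteriorPowerEquiv.symm, ?_⟩
  intro x y ylift hy u v w hu hv hw
  obtain rfl : u = exteriorPower.ιMulti R r₁ x := Subtype.ext hu
  obtain rfl : v = exteriorPower.ιMulti R r₃ y := Subtype.ext hv
  obtain rfl : w = exteriorPower.ιMulti R (r₁ + r₃) (Fin.append (f ∘ x) ylift) := Subtype.ext hw
  have hgy : g ∘ ylift = y := funext hy
  simp [LinearEquiv.symm_apply_eq, hb₂, hgy]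

/-- Determinant isomorphism for a short exact sequence `0 → P₁ → P₂ → P₃ → 0` of finite
free modules of ranks `r₁, r₁+r₃, r₃` over a commutative ring `R`: there is an
isomorphism `⋀^{r₁} P₁ ⊗ ⋀^{r₃} P₃ ≅ ⋀^{r₁+r₃} P₂` sending
`(x₁∧⋯∧x_{r₁}) ⊗ (y₁∧⋯∧y_{r₃})` to `f(x₁)∧⋯∧f(x_{r₁})∧ỹ₁∧⋯∧ỹ_{r₃}` for *any* choice of
lifts `ỹᵢ` of the `yᵢ` along `g` (so the map is well defined, independent of the lifts). -/
theorem stmt_11 (R : Type*) [CommRing R]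
    (P₁ P₂ P₃ : Type*) [AddCommGroup P₁] [Module R P₁] [AddCommGroup P₂] [Module R P₂]
    [AddCommGroup P₃] [Module R P₃]
    [Module.Free R P₁] [Module.Finite R P₁] [Module.Free R P₂] [Module.Finite R P₂]
    [Module.Free R P₃] [Module.Finite R P₃] (r₁ r₃ : ℕ)
    (h₁ : Module.finrank R P₁ = r₁) (h₃ : Module.finrank R P₃ = r₃)
    (h₂ : Module.finrank R P₂ = r₁ + r₃)
    (f : P₁ →ₗ[R] P₂) (g : P₂ →ₗ[R] P₃)
    (hf : Function.Injective f) (hg : Function.Surjective g)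
    (hfg : LinearMap.range f = LinearMap.ker g) :
    ∃ Φ : ((⋀[R]^r₁ P₁) ⊗[R] (⋀[R]^r₃ P₃)) ≃ₗ[R] ⋀[R]^(r₁ + r₃) P₂,
      ∀ (x : Fin r₁ → P₁) (y : Fin r₃ → P₃) (ylift : Fin r₃ → P₂),
        (∀ i, g (ylift i) = y i) →
        ∀ (u : ⋀[R]^r₁ P₁) (v : ⋀[R]^r₃ P₃) (w : ⋀[R]^(r₁ + r₃) P₂),
          (u : ExteriorAlgebra R P₁) = ExteriorAlgebra.ιMulti R r₁ x →
          (v : ExteriorAlgebra R P₃) = ExteriorAlgebra.ιMulti R r₃ y →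
          (w : ExteriorAlgebra R P₂)
            = ExteriorAlgebra.ιMulti R (r₁ + r₃) (Fin.append (f ∘ x) ylift) →
          Φ (u ⊗ₜ[R] v) = w :=
  stmt_11_general R P₁ P₂ P₃ r₁ r₃ h₁ h₃ f g hf hg hfg
end
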